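/- arXiv:1811.10450 — 4 statements merged into one kernel-verified Lean document; each statement's English description precedes it below -/
import Mathlib

section
/- Let (Ω, F, μ) be a probability space, let Z_0, Z_1, …, Z_n be random variables with values in measurable spaces E_0, …, E_n, let F_k = σ(Z_0, …, Z_k), let h be a bounded nonnegative measurable function of the trajectory (Z_0, …, Z_n) with p := E[h] and with μ[(μ[h | F_k])² | F_{k-1}] > 0 almost surely for each 1 ≤ k ≤ n. For each 0 ≤ k ≤ n−1 let G_k be a strictly positive bounded measurable function of (Z_0, …, Z_k) such that ∏_{s=0}^{k-1} G_s(Z_0,…,Z_s) and (μ[h|F_k])² ∏_{s=0}^{k-1} G_s(Z_0,…,Z_s)^{-1} are integrable for every k. Then Σ_{k=0}^{n} { E[ ∏_{s=0}^{k-1} G_s(Z_0,…,Z_s) ] · E[ (μ[h | F_k])² ∏_{s=0}^{k-1} G_s(Z_0,…,Z_s)^{-1} ] − p² } ≥ ( E[(μ[h | F_0])²] − p² ) + Σ_{k=1}^{n} { ( E[ √( μ[ (μ[h | F_k])² | F_{k-1} ] ) ] )² − p² }, with the convention that the empty product ∏_{s=0}^{-1} equals 1. -/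
open MeasureTheory

/-- The σ-algebra `σ(Z_0, …, Z_k)` generated by the first `k+1` coordinates of a
process `Z` with values in the measurable spaces `E i`. -/
def trajFiltration {Ω : Type*} {E : ℕ → Type*} [∀ i, MeasurableSpace (E i)]
    (Z : ∀ i, Ω → E i) (k : ℕ) : MeasurableSpace Ω :=
  ⨆ i ∈ Finset.range (k + 1), MeasurableSpace.comap (Z i) inferInstance

/-!
The `k = 0` terms agree. For `k ≥ 1` write `A = ∏_{s<k} G_s` and
`M_k = μ[(μ[h|F_k])² | F_{k-1}]`. Since `A` is `F_{k-1}`-measurable, the pull-out property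
gives `E[(μ[h|F_k])² / A] = E[M_k / A]`, and Cauchy–Schwarz applied to `√A` and `√(M_k / A)`
yields `(E[√M_k])² ≤ E[A] · E[M_k / A]`, with equality when `A ∝ √M_k`, i.e. for the
potentials `G*`.
-/

section CauchySchwarz

variable {α : Type*} [MeasurableSpace α] {μ : Measure α}

theorem sq_integral_mul_le_integral_sq_mul_integral_sq_of_nonneg {f g : α → ℝ}
    (hf0 : 0 ≤ᵐ[μ] f) (hg0 : 0 ≤ᵐ[μ] g) (hf : MemLp f 2 μ) (hg : MemLp g 2 μ) :
    (∫ a, f a * g a ∂μ) ^ 2 ≤ (∫ a, f a ^ 2 ∂μ) * ∫ a, g a ^ 2 ∂μ := by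
  have holder := integral_mul_le_Lp_mul_Lq_of_nonneg Real.HolderConjugate.two_two hf0 hg0
    (by simpa using hf) (by simpa using hg)
  have hfg : 0 ≤ ∫ a, f a * g a ∂μ :=
    integral_nonneg_of_ae (by filter_upwards [hf0, hg0] with a ha hb using mul_nonneg ha hb)
  simp only [Real.rpow_two, ← Real.sqrt_eq_rpow] at holder
  rw [← Real.sqrt_mul (integral_nonneg fun a => sq_nonneg _)] at holder
  exact (Real.le_sqrt hfg (by positivity)).mp holder

theorem sq_integral_sqrt_le_integral_mul_integral_div {A M : α → ℝ}
    (hA : ∀ᵐ a ∂μ, 0 < A a) (hM : 0 ≤ᵐ[μ] M)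
    (hAint : Integrable A μ) (hMAint : Integrable (fun a => M a / A a) μ) :
    (∫ a, √(M a) ∂μ) ^ 2 ≤ (∫ a, A a ∂μ) * ∫ a, M a / A a ∂μ := by
  have hA0 : 0 ≤ᵐ[μ] A := by filter_upwards [hA] with a ha using ha.le
  have hMA0 : 0 ≤ᵐ[μ] fun a => M a / A a := by
    filter_upwards [hA0, hM] with a ha hm using div_nonneg hm ha
  have sq_sqrt_ae {F : α → ℝ} (hF : 0 ≤ᵐ[μ] F) : (fun a => √(F a) ^ 2) =ᵐ[μ] F := by
    filter_upwards [hF] with a ha using Real.sq_sqrt ha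
  have memLp_sqrt {F : α → ℝ} (hF0 : 0 ≤ᵐ[μ] F) (hF : Integrable F μ) :
      MemLp (fun a => √(F a)) 2 μ :=
    (memLp_two_iff_integrable_sq hF.aemeasurable.sqrt.aestronglyMeasurable).mpr
      (hF.congr (sq_sqrt_ae hF0).symm)
  have hprod : (fun a => √(A a) * √(M a / A a)) =ᵐ[μ] fun a => √(M a) := by
    filter_upwards [hA] with a ha
    rw [← Real.sqrt_mul ha.le, mul_div_cancel₀ _ ha.ne']
  have cs := sq_integral_mul_le_integral_sq_mul_integral_sq_of_nonneg
    (.of_forall fun a => Real.sqrt_nonneg (A a)) (.of_forall fun a => Real.sqrt_nonneg (M a / A a))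
    (memLp_sqrt hA0 hAint) (memLp_sqrt hMA0 hMAint)
  rwa [integral_congr_ae hprod, integral_congr_ae (sq_sqrt_ae hA0),
    integral_congr_ae (sq_sqrt_ae hMA0)] at cs

end CauchySchwarz

theorem sq_integral_sqrt_condExp_le_integral_mul_integral_div {Ω : Type*}
    {m mΩ : MeasurableSpace Ω} {μ : Measure Ω} (hm : m ≤ mΩ) [SigmaFinite (μ.trim hm)]
    {A X : Ω → ℝ} (hA : ∀ᵐ ω ∂μ, 0 < A ω) (hAm : Measurable[m] A)
    (hX0 : 0 ≤ᵐ[μ] X) (hX : Integrable X μ)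
    (hAint : Integrable A μ) (hXA : Integrable (fun ω => X ω / A ω) μ) :
    (∫ ω, √(μ[X | m] ω) ∂μ) ^ 2 ≤ (∫ ω, A ω ∂μ) * ∫ ω, X ω / A ω ∂μ := by
  have hXA' : X / A = A⁻¹ * X := by rw [div_eq_inv_mul]
  have pull : μ[X / A | m] =ᵐ[μ] fun ω => μ[X | m] ω / A ω := by
    rw [hXA']
    filter_upwards [condExp_mul_of_stronglyMeasurable_left hAm.inv.stronglyMeasurable
      (hXA' ▸ hXA) hX] with ω hω
    rw [hω, Pi.mul_apply, Pi.inv_apply, div_eq_inv_mul]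
  calc (∫ ω, √(μ[X | m] ω) ∂μ) ^ 2
      ≤ (∫ ω, A ω ∂μ) * ∫ ω, μ[X | m] ω / A ω ∂μ :=
        sq_integral_sqrt_le_integral_mul_integral_div hA (condExp_nonneg hX0) hAint
          (integrable_condExp.congr pull)
    _ = (∫ ω, A ω ∂μ) * ∫ ω, X ω / A ω ∂μ := by
        rw [← integral_congr_ae pull, integral_condExp hm]
        rfl

section trajFiltration

variable {Ω : Type*} {E : ℕ → Type*} [∀ i, MeasurableSpace (E i)] (Z : ∀ i, Ω → E i)

theorem trajFiltration_mono : Monotone (trajFiltration Z) := fun _ _ hjk =>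
  biSup_mono fun _ hi => Finset.mem_range.mpr <| (Finset.mem_range.mp hi).trans_le (by omega)

theorem trajFiltration_le [MeasurableSpace Ω] (hZ : ∀ i, Measurable (Z i)) (k : ℕ) :
    trajFiltration Z k ≤ ‹MeasurableSpace Ω› :=
  iSup₂_le fun i _ => (hZ i).comap_le

end trajFiltration

theorem ips_variance_lower_bound_general {Ω : Type*} [MeasurableSpace Ω]
    (μ : Measure Ω) [IsProbabilityMeasure μ]
    {E : ℕ → Type*} [∀ i, MeasurableSpace (E i)]
    (Z : ∀ i, Ω → E i) (hZ : ∀ i, Measurable (Z i))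
    (n : ℕ) (h : Ω → ℝ)
    (hmeas : Measurable[trajFiltration Z n] h) (hnonneg : ∀ ω, 0 ≤ h ω)
    (C : ℝ) (hbdd : ∀ ω, h ω ≤ C)
    (p : ℝ)
    (G : ℕ → Ω → ℝ)
    (hGmeas : ∀ k, k ≤ n - 1 → Measurable[trajFiltration Z k] (G k))
    (hGpos : ∀ k, k ≤ n - 1 → ∀ ω, 0 < G k ω)
    (hint1 : ∀ k, k ≤ n → Integrable (fun ω => ∏ s ∈ Finset.range k, G s ω) μ)
    (hint2 : ∀ k, k ≤ n → Integrable
      (fun ω => ((μ[h | trajFiltration Z k]) ω) ^ 2 *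
        ∏ s ∈ Finset.range k, (G s ω)⁻¹) μ) :
    ((∫ ω, ((μ[h | trajFiltration Z 0]) ω) ^ 2 ∂μ) - p ^ 2) +
      ∑ k ∈ Finset.Icc 1 n,
        ((∫ ω, Real.sqrt
            ((μ[fun ω' => ((μ[h | trajFiltration Z k]) ω') ^ 2 |
                trajFiltration Z (k - 1)]) ω) ∂μ) ^ 2 - p ^ 2) ≤
    ∑ k ∈ Finset.range (n + 1),
      ((∫ ω, ∏ s ∈ Finset.range k, G s ω ∂μ) *
        (∫ ω, ((μ[h | trajFiltration Z k]) ω) ^ 2 *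
          ∏ s ∈ Finset.range k, (G s ω)⁻¹ ∂μ) - p ^ 2) := by
  have h_memLp : MemLp h 2 μ :=
    .of_bound (hmeas.mono (trajFiltration_le Z hZ n) le_rfl).aestronglyMeasurable C
      (.of_forall fun ω => by rw [Real.norm_of_nonneg (hnonneg ω)]; exact hbdd ω)
  have hsq (k : ℕ) : Integrable (fun ω => (μ[h | trajFiltration Z k] ω) ^ 2) μ :=
    (memLp_two_iff_integrable_sq integrable_condExp.aestronglyMeasurable).mp
      (h_memLp.condExp one_le_two)
  rw [Finset.range_eq_Ico, Finset.sum_eq_sum_Ico_succ_bot n.add_one_pos, zero_add,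
    Finset.Ico_add_one_right_eq_Icc]
  gcongr with k hk
  · simp
  obtain ⟨-, hkn⟩ := Finset.mem_Icc.mp hk
  have hrange {s : ℕ} (hs : s ∈ Finset.range k) : s ≤ k - 1 ∧ s ≤ n - 1 := by
    have := Finset.mem_range.mp hs; omega
  have key := sq_integral_sqrt_condExp_le_integral_mul_integral_div (trajFiltration_le Z hZ (k - 1))
    (.of_forall fun ω => Finset.prod_pos fun s hs => hGpos s (hrange hs).2 ω)
    (Finset.measurable_prod _ fun s hs => (hGmeas s (hrange hs).2).mono
      (trajFiltration_mono Z (hrange hs).1) le_rfl)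
    (.of_forall fun ω => sq_nonneg _) (hsq k) (hint1 k hkn)
    (by simpa only [Finset.prod_inv_distrib, div_eq_mul_inv] using hint2 k hkn)
  simpa only [Finset.prod_inv_distrib, div_eq_mul_inv] using key

/-- **The potentials `G*_k` minimize the IPS asymptotic variance.**
For any strictly positive bounded adapted potentials `(G_k)_{k<n}` (with the stated
integrability), the IPS asymptotic variance
`Σ_{k=0}^{n} { E[∏_{s<k} G_s] · E[(μ[h|F_k])² ∏_{s<k} G_s⁻¹] − p² }` is bounded below
by the optimal variance
`(E[(μ[h|F_0])²] − p²) + Σ_{k=1}^{n} { (E[√(μ[(μ[h|F_k])²|F_{k-1}])])² − p² }`. -/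
theorem ips_variance_lower_bound {Ω : Type*} [MeasurableSpace Ω]
    (μ : Measure Ω) [IsProbabilityMeasure μ]
    {E : ℕ → Type*} [∀ i, MeasurableSpace (E i)]
    (Z : ∀ i, Ω → E i) (hZ : ∀ i, Measurable (Z i))
    (n : ℕ) (h : Ω → ℝ)
    (hmeas : Measurable[trajFiltration Z n] h) (hnonneg : ∀ ω, 0 ≤ h ω)
    (C : ℝ) (hbdd : ∀ ω, h ω ≤ C)
    (p : ℝ) (hp : p = ∫ ω, h ω ∂μ)
    (hDpos : ∀ k, 1 ≤ k → k ≤ n → ∀ᵐ ω ∂μ,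
      0 < (μ[fun ω' => ((μ[h | trajFiltration Z k]) ω') ^ 2 |
              trajFiltration Z (k - 1)]) ω)
    (G : ℕ → Ω → ℝ)
    (hGmeas : ∀ k, k ≤ n - 1 → Measurable[trajFiltration Z k] (G k))
    (hGpos : ∀ k, k ≤ n - 1 → ∀ ω, 0 < G k ω)
    (hGbdd : ∀ k, k ≤ n - 1 → ∃ D, ∀ ω, G k ω ≤ D)
    (hint1 : ∀ k, k ≤ n → Integrable (fun ω => ∏ s ∈ Finset.range k, G s ω) μ)
    (hint2 : ∀ k, k ≤ n → Integrable
      (fun ω => ((μ[h | trajFiltration Z k]) ω) ^ 2 *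
        ∏ s ∈ Finset.range k, (G s ω)⁻¹) μ) :
    ((∫ ω, ((μ[h | trajFiltration Z 0]) ω) ^ 2 ∂μ) - p ^ 2) +
      ∑ k ∈ Finset.Icc 1 n,
        ((∫ ω, Real.sqrt
            ((μ[fun ω' => ((μ[h | trajFiltration Z k]) ω') ^ 2 |
                trajFiltration Z (k - 1)]) ω) ∂μ) ^ 2 - p ^ 2) ≤
    ∑ k ∈ Finset.range (n + 1),
      ((∫ ω, ∏ s ∈ Finset.range k, G s ω ∂μ) *
        (∫ ω, ((μ[h | trajFiltration Z k]) ω) ^ 2 *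
          ∏ s ∈ Finset.range k, (G s ω)⁻¹ ∂μ) - p ^ 2) :=
  ips_variance_lower_bound_general μ Z hZ n h hmeas hnonneg C hbdd p G hGmeas hGpos hint1 hint2
end

section
/- Let (Ω, F, μ) be a probability space, let Z_0, Z_1, …, Z_n be random variables with values in measurable spaces E_0, …, E_n, let F_k = σ(Z_0, …, Z_k), let h be a bounded nonnegative measurable function of (Z_0, …, Z_n) with p := E[h] and with D_k := μ[(μ[h | F_k])² | F_{k-1}] > 0 almost surely for each 1 ≤ k ≤ n (for k = 0 set D_0 := μ[(μ[h|F_1])² | F_0]). Define G*_0 := √D_0 and, for 1 ≤ k ≤ n−1, G*_k := √(D_{k+1}) / √(D_k). Then ∏_{s=0}^{k-1} G*_s = √(D_k) for every 1 ≤ k ≤ n, and consequently Σ_{k=0}^{n} { E[ ∏_{s=0}^{k-1} G*_s ] · E[ (μ[h | F_k])² ∏_{s=0}^{k-1} (G*_s)^{-1} ] − p² } = ( E[(μ[h | F_0])²] − p² ) + Σ_{k=1}^{n} { ( E[ √(D_k) ] )² − p² }, assuming all the expectations involved are finite; the empty product ∏_{s=0}^{-1} equals 1. -/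
open MeasureTheory

/-- **Value of the IPS asymptotic variance at the optimal potentials.**
With `D_k = μ[(μ[h|F_k])²|F_{k-1}]` (and `D_0 = μ[(μ[h|F_1])²|F_0]`), the optimal
potentials `G*_0 = √D_0`, `G*_k = √D_{k+1}/√D_k` satisfy `∏_{s<k} G*_s = √D_k`
a.s. for `1 ≤ k ≤ n`, and the IPS asymptotic variance at `G*` equals
`(E[(μ[h|F_0])²] − p²) + Σ_{k=1}^{n} { (E[√D_k])² − p² }`. -/
theorem ips_variance_at_optimal_potentials {Ω : Type*} [MeasurableSpace Ω]
    (μ : Measure Ω) [IsProbabilityMeasure μ]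
    {E : ℕ → Type*} [∀ i, MeasurableSpace (E i)]
    (Z : ∀ i, Ω → E i) (hZ : ∀ i, Measurable (Z i))
    (n : ℕ) (h : Ω → ℝ)
    (hmeas : Measurable[trajFiltration Z n] h) (hnonneg : ∀ ω, 0 ≤ h ω)
    (C : ℝ) (hbdd : ∀ ω, h ω ≤ C)
    (p : ℝ) (hp : p = ∫ ω, h ω ∂μ)
    (D : ℕ → Ω → ℝ)
    (hD : ∀ k, D k =
      μ[fun ω => ((μ[h | trajFiltration Z (max k 1)]) ω) ^ 2 |
          trajFiltration Z (k - 1)])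
    (hDpos : ∀ k, 1 ≤ k → k ≤ n → ∀ᵐ ω ∂μ, 0 < D k ω)
    (Gstar : ℕ → Ω → ℝ)
    (hG0 : Gstar 0 = fun ω => Real.sqrt (D 0 ω))
    (hGk : ∀ k, 1 ≤ k → k ≤ n - 1 →
      Gstar k = fun ω => Real.sqrt (D (k + 1) ω) / Real.sqrt (D k ω))
    (hint1 : ∀ k, k ≤ n → Integrable (fun ω => ∏ s ∈ Finset.range k, Gstar s ω) μ)
    (hint2 : ∀ k, k ≤ n → Integrable
      (fun ω => ((μ[h | trajFiltration Z k]) ω) ^ 2 *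
        ∏ s ∈ Finset.range k, (Gstar s ω)⁻¹) μ) :
    (∀ k, 1 ≤ k → k ≤ n → ∀ᵐ ω ∂μ,
      ∏ s ∈ Finset.range k, Gstar s ω = Real.sqrt (D k ω)) ∧
    ∑ k ∈ Finset.range (n + 1),
        ((∫ ω, ∏ s ∈ Finset.range k, Gstar s ω ∂μ) *
          (∫ ω, ((μ[h | trajFiltration Z k]) ω) ^ 2 *
            ∏ s ∈ Finset.range k, (Gstar s ω)⁻¹ ∂μ) - p ^ 2) =
      ((∫ ω, ((μ[h | trajFiltration Z 0]) ω) ^ 2 ∂μ) - p ^ 2) +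
        ∑ k ∈ Finset.Icc 1 n, ((∫ ω, Real.sqrt (D k ω) ∂μ) ^ 2 - p ^ 2) := by
  have hle : ∀ k, trajFiltration Z k ≤ ‹MeasurableSpace Ω› := by
    intro k
    refine iSup₂_le fun i _ => ?_
    exact MeasurableSpace.comap_le_iff_le_map.2 fun s hs => hZ i hs
  -- Part 1: the product of optimal potentials is √D_k
  have key : ∀ k, 1 ≤ k → k ≤ n → ∀ᵐ ω ∂μ,
      ∏ s ∈ Finset.range k, Gstar s ω = Real.sqrt (D k ω) := by
    intro k hk1 hkn
    induction k with
    | zero => omega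
    | succ k ih =>
      rcases Nat.eq_zero_or_pos k with hk0 | hkpos
      · subst hk0
        have hD01 : D 1 = D 0 := by rw [hD 0, hD 1]; norm_num
        filter_upwards with ω
        simp [hG0, hD01]
      · have hkn' : k ≤ n := by omega
        have hGkk := hGk k hkpos (by omega)
        filter_upwards [ih hkpos hkn', hDpos k hkpos hkn'] with ω hω hpos
        rw [Finset.prod_range_succ, hω, hGkk]
        have hs : Real.sqrt (D k ω) ≠ 0 := by
          positivity
        field_simp
  refine ⟨key, ?_⟩
  -- Integrability of h
  have hhm : Measurable h := hmeas.mono (hle n) le_rfl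
  have hint_h : Integrable h μ := by
    refine Integrable.mono' (integrable_const C) hhm.aestronglyMeasurable ?_
    filter_upwards with ω
    rw [Real.norm_eq_abs, abs_of_nonneg (hnonneg ω)]
    exact hbdd ω
  -- a.e. bounds on conditional expectations of h
  have hg_bd : ∀ j : ℕ,
      ∀ᵐ ω ∂μ, |(μ[h | trajFiltration Z j]) ω| ≤ C := by
    intro j
    have h1 : 0 ≤ᵐ[μ] μ[h | trajFiltration Z j] := condExp_nonneg (ae_of_all _ hnonneg)
    have h2 : μ[h | trajFiltration Z j] ≤ᵐ[μ] μ[(fun _ => C) | trajFiltration Z j] :=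
      condExp_mono hint_h (integrable_const C) (ae_of_all _ hbdd)
    have h3 := condExp_const (hle j) C (μ := μ)
    filter_upwards [h1, h2] with ω h1 h2
    rw [abs_of_nonneg h1]
    refine h2.trans ?_
    rw [h3]
  -- integrability of (μ[h|F_k])²
  have hgsq_int : ∀ j : ℕ,
      Integrable (fun ω => ((μ[h | trajFiltration Z j]) ω) ^ 2) μ := by
    intro j
    refine Integrable.mono' (integrable_const (C ^ 2))
      (((stronglyMeasurable_condExp.mono (hle j)).measurable.pow_const 2).aestronglyMeasurable) ?_
    filter_upwards [hg_bd j] with ω hω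
    rw [Real.norm_eq_abs, abs_pow]
    exact pow_le_pow_left₀ (abs_nonneg _) hω 2
  -- the key integral identity for 1 ≤ k ≤ n
  have keyB : ∀ k, 1 ≤ k → k ≤ n →
      (∫ ω, ((μ[h | trajFiltration Z k]) ω) ^ 2 *
        ∏ s ∈ Finset.range k, (Gstar s ω)⁻¹ ∂μ) = ∫ ω, Real.sqrt (D k ω) ∂μ := by
    intro k hk1 hkn
    have hmle := hle (k - 1)
    set m := trajFiltration Z (k - 1) with hm_def
    set f : Ω → ℝ := fun ω => (Real.sqrt (D k ω))⁻¹ with hf_def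
    set gsq : Ω → ℝ := fun ω => ((μ[h | trajFiltration Z k]) ω) ^ 2 with hgsq_def
    -- D k is m-strongly measurable
    have hDsm : StronglyMeasurable[m] (D k) := by
      rw [hD k]; exact stronglyMeasurable_condExp
    have hfsm : StronglyMeasurable[m] f :=
      (hDsm.measurable.sqrt.inv).stronglyMeasurable
    -- a.e. equality of the product of inverses with f
    have hprodinv : ∀ᵐ ω ∂μ, ∏ s ∈ Finset.range k, (Gstar s ω)⁻¹ = f ω := by
      filter_upwards [key k hk1 hkn] with ω hω
      rw [Finset.prod_inv_distrib, hω]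
    have hae : (fun ω => gsq ω * ∏ s ∈ Finset.range k, (Gstar s ω)⁻¹)
        =ᵐ[μ] fun ω => f ω * gsq ω := by
      filter_upwards [hprodinv] with ω hω
      rw [hω, mul_comm]
    have hfg_int : Integrable (fun ω => f ω * gsq ω) μ :=
      (hint2 k hkn).congr hae
    have hgsqi : Integrable gsq μ := hgsq_int k
    -- pull-out property
    have hcond : μ[f * gsq | m] =ᵐ[μ] f * μ[gsq | m] :=
      condExp_mul_of_stronglyMeasurable_left hfsm hfg_int hgsqi
    have hDk : μ[gsq | m] = D k := by
      rw [hD k, hgsq_def, max_eq_left hk1]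
    calc (∫ ω, gsq ω * ∏ s ∈ Finset.range k, (Gstar s ω)⁻¹ ∂μ)
        = ∫ ω, (f * gsq) ω ∂μ := integral_congr_ae hae
      _ = ∫ ω, (μ[f * gsq | m]) ω ∂μ := (integral_condExp hmle).symm
      _ = ∫ ω, f ω * D k ω ∂μ := by
          refine integral_congr_ae ?_
          filter_upwards [hcond] with ω hω
          rw [hω, Pi.mul_apply, hDk]
      _ = ∫ ω, Real.sqrt (D k ω) ∂μ := by
          refine integral_congr_ae (ae_of_all _ fun ω => ?_)
          rw [hf_def]
          simp only
          rw [inv_mul_eq_div, Real.div_sqrt]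
  -- similarly, the integral of the product of potentials
  have keyA : ∀ k, 1 ≤ k → k ≤ n →
      (∫ ω, ∏ s ∈ Finset.range k, Gstar s ω ∂μ) = ∫ ω, Real.sqrt (D k ω) ∂μ :=
    fun k hk1 hkn => integral_congr_ae (key k hk1 hkn)
  -- now the sum identity
  rw [Finset.sum_range_succ']
  have h0 : (∫ ω, ∏ s ∈ Finset.range 0, Gstar s ω ∂μ) *
      (∫ ω, ((μ[h | trajFiltration Z 0]) ω) ^ 2 *
        ∏ s ∈ Finset.range 0, (Gstar s ω)⁻¹ ∂μ) - p ^ 2 =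
      (∫ ω, ((μ[h | trajFiltration Z 0]) ω) ^ 2 ∂μ) - p ^ 2 := by
    simp
  rw [h0, add_comm]
  congr 1
  refine Finset.sum_bij' (fun i _ => i + 1) (fun k _ => k - 1) ?_ ?_ ?_ ?_ ?_
  · intro i hi
    simp only [Finset.mem_range] at hi
    simp only [Finset.mem_Icc]
    omega
  · intro k hk
    simp only [Finset.mem_Icc] at hk
    simp only [Finset.mem_range]
    omega
  · intro i hi
    show i + 1 - 1 = i
    omega
  · intro k hk
    simp only [Finset.mem_Icc] at hk
    show k - 1 + 1 = k
    omega
  · intro i hi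
    simp only [Finset.mem_range] at hi
    rw [keyA (i + 1) (by omega) (by omega), keyB (i + 1) (by omega) (by omega)]
    ring
end

section
/- Let (ε_i)_{i≥1} be i.i.d. standard Gaussian random variables on a probability space, let Z_0 = 0 and Z_k = ε_1 + … + ε_k, and let F_k = σ(ε_1, …, ε_k). Fix n ≥ 1, real numbers a and b, and set h = exp(b(Z_n − a)). Then for every 1 ≤ k ≤ n, almost surely E[ ( E[h | F_k] )² | F_{k-1} ] = exp( (n−k) b² + 2b² + 2b (Z_{k-1} − a) ). Consequently, for 1 ≤ k ≤ n−1, almost surely √( E[(E[h|F_{k+1}])² | F_k] / E[(E[h|F_k])² | F_{k-1}] ) = exp( −b²/2 + b (Z_k − Z_{k-1}) ). -/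
/-!
Since the increments of the walk are independent standard Gaussians,
`E[exp(c Z_m + d) | F_j] = exp(c Z_j + d + (m - j) c² / 2)` for `j ≤ m`: split
`Z_m = Z_j + (Z_m - Z_j)`, pull out the `F_j`-measurable factor and average the independent one
with the Gaussian moment generating function. Applying this to `h` with `j = k`, squaring, and
applying it again with `j = k - 1` gives the second moment; the ratio of two consecutive second
moments is then a computation with exponents.
-/

open MeasureTheory ProbabilityTheory

/-- The σ-algebra `σ(ε_1, …, ε_k)` generated by the first `k` steps of a walk. -/
def walkFiltration {Ω : Type*} (ε : ℕ → Ω → ℝ) (k : ℕ) : MeasurableSpace Ω :=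
  ⨆ i ∈ Finset.Icc 1 k, MeasurableSpace.comap (ε i) inferInstance

open Finset Real

theorem condExp_mul_of_indep {Ω : Type*} {m₁ m₂ mΩ : MeasurableSpace Ω} {μ : Measure Ω}
    [IsFiniteMeasure μ] (hm₁ : m₁ ≤ mΩ) (hm₂ : m₂ ≤ mΩ) (hind : Indep m₁ m₂ μ)
    {f g : Ω → ℝ} (hf : StronglyMeasurable[m₁] f) (hg : StronglyMeasurable[m₂] g)
    (hfi : Integrable f μ) (hgi : Integrable g μ) :
    μ[f * g | m₁] =ᵐ[μ] fun ω => f ω * ∫ ω', g ω' ∂μ := by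
  have hfg : IndepFun f g μ := by
    rw [IndepFun_iff_Indep]
    exact indep_of_indep_of_le hind hf.measurable.comap_le hg.measurable.comap_le
  filter_upwards [condExp_mul_of_stronglyMeasurable_left hf (hfg.integrable_mul hfi hgi) hgi,
    condExp_indep_eq hm₂ hm₁ hg hind.symm] with ω hpull hconst
  rw [hpull, Pi.mul_apply, hconst]

theorem sum_Icc_one_eq_add_sum_Ioc {M : Type*} [AddCommMonoid M] (f : ℕ → M) {j m : ℕ} (hjm : j ≤ m) :
    ∑ i ∈ Icc 1 m, f i = ∑ i ∈ Icc 1 j, f i + ∑ i ∈ Ioc j m, f i := by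
  have hIcc : ∀ k : ℕ, Icc 1 k = Ioc 0 k := Icc_add_one_left_eq_Ioc 0
  rw [hIcc, hIcc, sum_Ioc_consecutive f (Nat.zero_le j) hjm]

section GaussianWalk

variable {Ω : Type*} {mΩ : MeasurableSpace Ω} {μ : Measure Ω} {ε : ℕ → Ω → ℝ}

theorem iSup_comap_le (hmeas : ∀ i, Measurable (ε i)) (s : Finset ℕ) :
    ⨆ i ∈ s, MeasurableSpace.comap (ε i) inferInstance ≤ mΩ :=
  iSup₂_le fun i _ => (hmeas i).comap_le

theorem measurable_iSup_comap_sum (s : Finset ℕ) :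
    Measurable[⨆ i ∈ s, MeasurableSpace.comap (ε i) inferInstance] fun ω => ∑ i ∈ s, ε i ω :=
  Finset.measurable_sum _ fun i hi => Measurable.of_comap_le <|
    le_iSup₂ (f := fun i _ => MeasurableSpace.comap (ε i) inferInstance) i hi

theorem indep_walkFiltration_increments (hmeas : ∀ i, Measurable (ε i))
    (hindep : iIndepFun ε μ) (j m : ℕ) :
    Indep (walkFiltration ε j) (⨆ i ∈ Ioc j m, MeasurableSpace.comap (ε i) inferInstance) μ := by
  refine indep_iSup_of_disjoint (fun i => (hmeas i).comap_le) hindep ?_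
  rw [Finset.disjoint_coe, Finset.disjoint_left]
  intro i hi hi'
  simp only [Finset.mem_Ioc, Finset.mem_Icc] at hi hi'
  omega

theorem integral_exp_mul_sum_standard_gaussian (hmeas : ∀ i, Measurable (ε i))
    (hindep : iIndepFun ε μ) {s : Finset ℕ} (hgauss : ∀ i ∈ s, μ.map (ε i) = gaussianReal 0 1)
    (t : ℝ) : ∫ ω, exp (t * ∑ i ∈ s, ε i ω) ∂μ = exp (#s * (t ^ 2 / 2)) := by
  have hmgf : mgf (∑ i ∈ s, ε i) μ t = ∏ i ∈ s, mgf (ε i) μ t := hindep.mgf_sum hmeas s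
  rw [prod_congr rfl fun i hi => mgf_gaussianReal (hgauss i hi) t, prod_const, ← exp_nat_mul]
    at hmgf
  simpa [mgf] using hmgf

theorem integrable_exp_mul_sum_standard_gaussian (hmeas : ∀ i, Measurable (ε i))
    (hindep : iIndepFun ε μ) {s : Finset ℕ} (hgauss : ∀ i ∈ s, μ.map (ε i) = gaussianReal 0 1)
    (t : ℝ) : Integrable (fun ω => exp (t * ∑ i ∈ s, ε i ω)) μ :=
  Integrable.of_integral_ne_zero <| by
    rw [integral_exp_mul_sum_standard_gaussian hmeas hindep hgauss]
    exact (exp_pos _).ne'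

variable [IsProbabilityMeasure μ]

theorem condExp_exp_walk (hmeas : ∀ i, Measurable (ε i)) (hindep : iIndepFun ε μ)
    (hgauss : ∀ i, 1 ≤ i → μ.map (ε i) = gaussianReal 0 1) {j m : ℕ} (hjm : j ≤ m) (c d : ℝ) :
    μ[fun ω => exp (c * ∑ i ∈ Icc 1 m, ε i ω + d) | walkFiltration ε j] =ᵐ[μ]
      fun ω => exp (c * ∑ i ∈ Icc 1 j, ε i ω + d + (m - j : ℕ) * (c ^ 2 / 2)) := by
  have hgauss_past : ∀ i ∈ Icc 1 j, μ.map (ε i) = gaussianReal 0 1 := fun i hi =>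
    hgauss i (mem_Icc.mp hi).1
  have hgauss_future : ∀ i ∈ Ioc j m, μ.map (ε i) = gaussianReal 0 1 := fun i hi =>
    hgauss i (by simp only [mem_Ioc] at hi; omega)
  have hsplit : (fun ω => exp (c * ∑ i ∈ Icc 1 m, ε i ω + d)) =
      (fun ω => exp (c * ∑ i ∈ Icc 1 j, ε i ω + d)) *
        fun ω => exp (c * ∑ i ∈ Ioc j m, ε i ω) := by
    ext ω
    simp only [Pi.mul_apply, ← exp_add, sum_Icc_one_eq_add_sum_Ioc _ hjm]
    ring_nf
  have hpast_int : Integrable (fun ω => exp (c * ∑ i ∈ Icc 1 j, ε i ω + d)) μ := by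
    simpa only [exp_add] using
      (integrable_exp_mul_sum_standard_gaussian hmeas hindep hgauss_past c).mul_const (exp d)
  rw [hsplit]
  filter_upwards [condExp_mul_of_indep (m₁ := walkFiltration ε j) (iSup_comap_le hmeas _)
    (iSup_comap_le hmeas _) (indep_walkFiltration_increments hmeas hindep j m)
    (((measurable_iSup_comap_sum _).const_mul c).add_const d).exp.stronglyMeasurable
    ((measurable_iSup_comap_sum _).const_mul c).exp.stronglyMeasurable
    hpast_int (integrable_exp_mul_sum_standard_gaussian hmeas hindep hgauss_future c)] with ω hω
  rw [hω, integral_exp_mul_sum_standard_gaussian hmeas hindep hgauss_future, Nat.card_Ioc,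
    ← exp_add]

theorem condExp_sq_condExp_exp_walk (hmeas : ∀ i, Measurable (ε i)) (hindep : iIndepFun ε μ)
    (hgauss : ∀ i, 1 ≤ i → μ.map (ε i) = gaussianReal 0 1) {n k : ℕ} (hkn : k + 1 ≤ n)
    (a b : ℝ) :
    μ[fun ω' => (μ[fun ω => exp (b * (∑ i ∈ Icc 1 n, ε i ω - a)) |
        walkFiltration ε (k + 1)] ω') ^ 2 | walkFiltration ε k] =ᵐ[μ] fun ω =>
      exp ((n - (k + 1) : ℕ) * b ^ 2 + 2 * b ^ 2 + 2 * b * (∑ i ∈ Icc 1 k, ε i ω - a)) := by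
  have hform : (fun ω => exp (b * (∑ i ∈ Icc 1 n, ε i ω - a))) =
      fun ω => exp (b * ∑ i ∈ Icc 1 n, ε i ω + -(a * b)) := by
    ext ω
    ring_nf
  have hsq : (fun ω' => (μ[fun ω => exp (b * (∑ i ∈ Icc 1 n, ε i ω - a)) |
      walkFiltration ε (k + 1)] ω') ^ 2) =ᵐ[μ] fun ω =>
        exp (2 * b * ∑ i ∈ Icc 1 (k + 1), ε i ω + (-(2 * a * b) + (n - (k + 1) : ℕ) * b ^ 2)) := by
    filter_upwards [hform ▸ condExp_exp_walk hmeas hindep hgauss hkn b (-(a * b))] with ω hω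
    rw [hω, ← exp_nat_mul]
    ring_nf
  filter_upwards [condExp_congr_ae hsq, condExp_exp_walk hmeas hindep hgauss (k.le_add_right 1)
    (2 * b) (-(2 * a * b) + (n - (k + 1) : ℕ) * b ^ 2)] with ω h₁ h₂
  rw [h₁, h₂, Nat.add_sub_cancel_left]
  ring_nf

end GaussianWalk

theorem gaussian_walk_optimal_potential_general {Ω : Type*} [MeasurableSpace Ω]
    (μ : Measure Ω) [IsProbabilityMeasure μ]
    (ε : ℕ → Ω → ℝ) (hmeas : ∀ i, Measurable (ε i))
    (hindep : iIndepFun ε μ)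
    (hgauss : ∀ i, 1 ≤ i → μ.map (ε i) = gaussianReal 0 1)
    (Z : ℕ → Ω → ℝ) (hZ : ∀ k ω, Z k ω = ∑ i ∈ Finset.Icc 1 k, ε i ω)
    (n : ℕ) (a b : ℝ)
    (h : Ω → ℝ) (hh : h = fun ω => Real.exp (b * (Z n ω - a))) :
    (∀ k, 1 ≤ k → k ≤ n → ∀ᵐ ω ∂μ,
      (μ[fun ω' => ((μ[h | walkFiltration ε k]) ω') ^ 2 |
          walkFiltration ε (k - 1)]) ω =
        Real.exp ((n - k : ℕ) * b ^ 2 + 2 * b ^ 2 + 2 * b * (Z (k - 1) ω - a))) ∧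
    (∀ k, 1 ≤ k → k ≤ n - 1 → ∀ᵐ ω ∂μ,
      Real.sqrt
          ((μ[fun ω' => ((μ[h | walkFiltration ε (k + 1)]) ω') ^ 2 |
              walkFiltration ε k]) ω /
            (μ[fun ω' => ((μ[h | walkFiltration ε k]) ω') ^ 2 |
              walkFiltration ε (k - 1)]) ω) =
        Real.exp (-b ^ 2 / 2 + b * (Z k ω - Z (k - 1) ω))) := by
  obtain rfl : Z = fun k ω => ∑ i ∈ Icc 1 k, ε i ω := funext₂ hZ
  subst hh
  have second_moment := fun k (hk : k + 1 ≤ n) =>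
    condExp_sq_condExp_exp_walk hmeas hindep hgauss hk a b
  refine ⟨fun k hk hkn => ?_, fun k hk hkn => ?_⟩
  · obtain ⟨k, rfl⟩ := Nat.exists_eq_add_of_le' hk
    simp only [Nat.add_sub_cancel]
    exact second_moment k hkn
  · obtain ⟨k, rfl⟩ := Nat.exists_eq_add_of_le' hk
    filter_upwards [second_moment k (by omega), second_moment (k + 1) (by omega)] with ω h₁ h₂
    simp only [Nat.add_sub_cancel]
    rw [h₁, h₂, ← exp_sub, ← exp_half, Nat.sub_add_eq n (k + 1) 1,
      Nat.cast_sub (show 1 ≤ n - (k + 1) by omega), sum_Icc_succ_top (Nat.le_add_left 1 k)]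
    congr 1
    push_cast
    ring

/-- **Conditional second moments for the Gaussian random walk toy example.**
For the Gaussian random walk `Z_k = ε_1 + … + ε_k` and `h = exp(b(Z_n − a))`,
one has a.s. `E[(E[h|F_k])²|F_{k-1}] = exp((n−k)b² + 2b² + 2b(Z_{k-1} − a))` for
`1 ≤ k ≤ n`, and consequently for `1 ≤ k ≤ n−1` the optimal-potential ratio is
`√(E[(E[h|F_{k+1}])²|F_k] / E[(E[h|F_k])²|F_{k-1}]) = exp(−b²/2 + b(Z_k − Z_{k-1}))`. -/
theorem gaussian_walk_optimal_potential {Ω : Type*} [MeasurableSpace Ω]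
    (μ : Measure Ω) [IsProbabilityMeasure μ]
    (ε : ℕ → Ω → ℝ) (hmeas : ∀ i, Measurable (ε i))
    (hindep : iIndepFun ε μ)
    (hgauss : ∀ i, 1 ≤ i → μ.map (ε i) = gaussianReal 0 1)
    (Z : ℕ → Ω → ℝ) (hZ : ∀ k ω, Z k ω = ∑ i ∈ Finset.Icc 1 k, ε i ω)
    (n : ℕ) (hn : 1 ≤ n) (a b : ℝ)
    (h : Ω → ℝ) (hh : h = fun ω => Real.exp (b * (Z n ω - a))) :
    (∀ k, 1 ≤ k → k ≤ n → ∀ᵐ ω ∂μ,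
      (μ[fun ω' => ((μ[h | walkFiltration ε k]) ω') ^ 2 |
          walkFiltration ε (k - 1)]) ω =
        Real.exp ((n - k : ℕ) * b ^ 2 + 2 * b ^ 2 + 2 * b * (Z (k - 1) ω - a))) ∧
    (∀ k, 1 ≤ k → k ≤ n - 1 → ∀ᵐ ω ∂μ,
      Real.sqrt
          ((μ[fun ω' => ((μ[h | walkFiltration ε (k + 1)]) ω') ^ 2 |
              walkFiltration ε k]) ω /
            (μ[fun ω' => ((μ[h | walkFiltration ε k]) ω') ^ 2 |
              walkFiltration ε (k - 1)]) ω) =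
        Real.exp (-b ^ 2 / 2 + b * (Z k ω - Z (k - 1) ω))) :=
  gaussian_walk_optimal_potential_general μ ε hmeas hindep hgauss Z hZ n a b h hh
end

section
/- Let (ε_i)_{i≥1} be i.i.d. standard Gaussian random variables on a probability space, let Z_0 = 0 and Z_k = ε_1 + … + ε_k, and let F_k = σ(ε_1, …, ε_k). Fix n ≥ 1, real numbers a and b with b ≠ 0, set h = exp(b(Z_n − a)) and p = exp(n b²/2 − a b), and define the potentials G_0 = exp(b Z_0) and G_k = exp(b(Z_k − Z_{k-1})) for 1 ≤ k ≤ n−1, so that ∏_{s=0}^{k-1} G_s = exp(b Z_{k-1}) for k ≥ 1 (empty product equal to 1). Then Σ_{k=0}^{n} { E[ ∏_{s=0}^{k-1} G_s ] · E[ ( E[h | F_k] )² ∏_{s=0}^{k-1} G_s^{-1} ] − p² } = n ( e^{b²} − 1 ) e^{n b² − 2 a b} = n ( e^{b²} − 1 ) p². -/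
/-!
With `Z_k = ε_1 + ⋯ + ε_k` and independent increments, `E[h | F_k] = exp(b(Z_k − a) + (n − k)b²/2)`,
and the potentials telescope to `∏_{s<k} G_s = exp(b Z_{k-1})`. For `k ≥ 1` the `k`-th summand is
therefore a product of two Gaussian exponential moments,
`E[e^{b Z_{k-1}}] · e^{(n-k)b² - 2ab} E[e^{b Z_{k-1} + 2b ε_k}] = e^{b²} p²`,
while the summand for `k = 0` is `E[h]² = p²`. Summing the `n` excesses `(e^{b²} − 1)p²` gives the
result.
-/

open MeasureTheory ProbabilityTheory

open Real Finset

namespace ProbabilityTheory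

variable {Ω ι : Type*} {m mΩ : MeasurableSpace Ω} {μ : Measure Ω}

theorem measurable_of_mem_biSup_comap {β : Type*} [MeasurableSpace β] {f : ι → Ω → β}
    {s : Set ι} {i : ι} (hi : i ∈ s) :
    Measurable[⨆ j ∈ s, MeasurableSpace.comap (f j) inferInstance] (f i) :=
  measurable_iff_comap_le.mpr <|
    le_iSup₂ (f := fun j (_ : j ∈ s) => MeasurableSpace.comap (f j) inferInstance) i hi

theorem biSup_comap_le {β : Type*} [MeasurableSpace β] {f : ι → Ω → β}
    (hf : ∀ i, Measurable (f i)) (s : Set ι) :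
    ⨆ j ∈ s, MeasurableSpace.comap (f j) inferInstance ≤ mΩ :=
  iSup₂_le fun i _ => (hf i).comap_le

theorem condExp_mul_of_indep {m' : MeasurableSpace Ω} [IsFiniteMeasure μ] (hm : m ≤ mΩ)
    (hm' : m' ≤ mΩ) (hindep : Indep m m' μ) {f g : Ω → ℝ} (hf : StronglyMeasurable[m] f)
    (hg : StronglyMeasurable[m'] g) (hfg : Integrable (f * g) μ) (hgi : Integrable g μ) :
    μ[f * g | m] =ᵐ[μ] fun ω => f ω * ∫ ω', g ω' ∂μ := by
  filter_upwards [condExp_mul_of_stronglyMeasurable_left hf hfg hgi,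
    condExp_indep_eq hm' hm hg hindep.symm] with ω hfg hg
  rw [hfg, Pi.mul_apply, hg]

theorem integrable_exp_mul_of_map_eq_gaussianReal {X : Ω → ℝ} {c : ℝ} {v : NNReal}
    (hX : μ.map X = gaussianReal c v) (t : ℝ) : Integrable (fun ω => exp (t * X ω)) μ := by
  have : NeZero μ := ⟨fun h0 => IsProbabilityMeasure.ne_zero (gaussianReal c v) <| by
    simpa [h0] using hX.symm⟩
  rw [← mgf_pos_iff, mgf_gaussianReal hX]
  exact exp_pos _

variable {ε : ι → Ω → ℝ}

theorem iIndepFun.integrable_exp_sum_mul_of_gaussianReal (hmeas : ∀ i, Measurable (ε i))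
    (hindep : iIndepFun ε μ) {s : Finset ι} (hgauss : ∀ i ∈ s, μ.map (ε i) = gaussianReal 0 1)
    (c : ι → ℝ) : Integrable (fun ω => exp (∑ i ∈ s, c i * ε i ω)) μ := by
  have := hindep.isProbabilityMeasure
  have hscaled := hindep.comp (fun i x => c i * x) fun i => measurable_const_mul _
  simpa using hscaled.integrable_exp_mul_sum (t := 1) (fun i => (hmeas i).const_mul _)
    fun i hi => by simpa using integrable_exp_mul_of_map_eq_gaussianReal (hgauss i hi) (c i)

theorem iIndepFun.integral_exp_sum_mul_of_gaussianReal (hmeas : ∀ i, Measurable (ε i))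
    (hindep : iIndepFun ε μ) {s : Finset ι} (hgauss : ∀ i ∈ s, μ.map (ε i) = gaussianReal 0 1)
    (c : ι → ℝ) : ∫ ω, exp (∑ i ∈ s, c i * ε i ω) ∂μ = exp (∑ i ∈ s, c i ^ 2 / 2) := by
  have := (hindep.comp (fun i x => c i * x) fun i => measurable_const_mul _).mgf_sum
    (t := 1) (fun i => (hmeas i).const_mul _) s
  simp only [mgf, one_mul, Finset.sum_apply, Function.comp_apply] at this
  rw [this, exp_sum]
  refine prod_congr rfl fun i hi => ?_
  simpa [mgf] using mgf_gaussianReal (hgauss i hi) (c i)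

end ProbabilityTheory

section Walk

variable {Ω : Type*} {mΩ : MeasurableSpace Ω} {μ : Measure Ω} {ε : ℕ → Ω → ℝ}

def walk (ε : ℕ → Ω → ℝ) (k : ℕ) (ω : Ω) : ℝ := ∑ i ∈ Icc 1 k, ε i ω

@[simp] theorem walk_zero (ω : Ω) : walk ε 0 ω = 0 := by simp [walk]

theorem walk_add_one (k : ℕ) (ω : Ω) : walk ε (k + 1) ω = walk ε k ω + ε (k + 1) ω :=
  sum_Icc_succ_top (by omega) _

theorem walk_add (k m : ℕ) (ω : Ω) :
    walk ε (k + m) ω = walk ε k ω + ∑ i ∈ Ioc k (k + m), ε i ω := by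
  have hIcc : ∀ j, Icc 1 j = Ioc 0 j := fun j => by simpa using Icc_add_one_left_eq_Ioc 0 j
  simp only [walk, hIcc]
  exact (sum_Ioc_consecutive _ k.zero_le (k.le_add_right m)).symm

theorem walkFiltration_le (hmeas : ∀ i, Measurable (ε i)) (k : ℕ) : walkFiltration ε k ≤ mΩ :=
  biSup_comap_le hmeas _

theorem measurable_walk (k : ℕ) : Measurable[walkFiltration ε k] (walk ε k) :=
  Finset.measurable_fun_sum _ fun _ hi => measurable_of_mem_biSup_comap (mem_coe.2 hi)

theorem indep_walkFiltration_iSup (hmeas : ∀ i, Measurable (ε i)) (hindep : iIndepFun ε μ)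
    {k : ℕ} {s : Set ℕ} (hs : ∀ i ∈ s, k < i) :
    Indep (walkFiltration ε k) (⨆ i ∈ s, MeasurableSpace.comap (ε i) inferInstance) μ :=
  indep_iSup_of_disjoint (S := ↑(Icc 1 k)) (fun i => (hmeas i).comap_le) hindep
    (Set.disjoint_left.mpr fun i hik his => by
      have := hs i his
      simp only [coe_Icc, Set.mem_Icc] at hik
      omega)

theorem integral_exp_mul_walk_add (hmeas : ∀ i, Measurable (ε i)) (hindep : iIndepFun ε μ)
    (hgauss : ∀ i, 1 ≤ i → μ.map (ε i) = gaussianReal 0 1) (j : ℕ) (b c : ℝ) :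
    ∫ ω, exp (b * walk ε j ω + c * ε (j + 1) ω) ∂μ = exp (j * b ^ 2 / 2 + c ^ 2 / 2) := by
  set coef := Function.update (fun _ => b) (j + 1) c
  have hcoef : ∀ i ∈ Icc 1 j, coef i = b := fun i hi =>
    Function.update_of_ne (by simp only [mem_Icc] at hi; omega) _ _
  have hlast : coef (j + 1) = c := Function.update_self _ _ _
  have hlin : ∀ ω, b * walk ε j ω + c * ε (j + 1) ω = ∑ i ∈ Icc 1 (j + 1), coef i * ε i ω := by
    intro ω
    rw [sum_Icc_succ_top (by omega), sum_congr rfl fun i hi => by rw [hcoef i hi], walk, mul_sum,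
      hlast]
  have hquad : ∑ i ∈ Icc 1 (j + 1), coef i ^ 2 / 2 = j * b ^ 2 / 2 + c ^ 2 / 2 := by
    rw [sum_Icc_succ_top (by omega), sum_congr rfl fun i hi => by rw [hcoef i hi], sum_const,
      Nat.card_Icc, hlast, nsmul_eq_mul, Nat.add_sub_cancel, mul_div_assoc]
  simp only [hlin, ← hquad]
  exact hindep.integral_exp_sum_mul_of_gaussianReal hmeas (fun i hi => hgauss i (mem_Icc.1 hi).1)
    coef

theorem condExp_exp_mul_walk (hmeas : ∀ i, Measurable (ε i)) (hindep : iIndepFun ε μ)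
    (hgauss : ∀ i, 1 ≤ i → μ.map (ε i) = gaussianReal 0 1) (a b : ℝ) (k m : ℕ) :
    μ[fun ω => exp (b * (walk ε (k + m) ω - a)) | walkFiltration ε k]
      =ᵐ[μ] fun ω => exp (b * (walk ε k ω - a) + m * b ^ 2 / 2) := by
  have := hindep.isProbabilityMeasure
  set g : Ω → ℝ := fun ω => exp (∑ i ∈ Ioc k (k + m), b * ε i ω)
  have hsplit : (fun ω => exp (b * (walk ε (k + m) ω - a)))
      = (fun ω => exp (b * (walk ε k ω - a))) * g := by
    funext ω
    simp only [Pi.mul_apply, g, ← exp_add, ← mul_sum, walk_add]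
    ring_nf
  have hgauss_Ioc : ∀ i ∈ Ioc k (k + m), μ.map (ε i) = gaussianReal 0 1 :=
    fun i hi => hgauss i (by have := (mem_Ioc.1 hi).1; omega)
  have hg : ∫ ω, g ω ∂μ = exp (m * b ^ 2 / 2) := by
    simp only [g, hindep.integral_exp_sum_mul_of_gaussianReal hmeas hgauss_Ioc, sum_const,
      Nat.card_Ioc, nsmul_eq_mul, Nat.add_sub_cancel_left, mul_div_assoc]
  have hfg : Integrable (fun ω => exp (b * (walk ε (k + m) ω - a))) μ := by
    refine ((hindep.integrable_exp_sum_mul_of_gaussianReal hmeas (s := Icc 1 (k + m))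
      (fun i hi => hgauss i (mem_Icc.1 hi).1) fun _ => b).const_mul (exp (-(a * b)))).congr
      (ae_of_all _ fun ω => ?_)
    simp only [walk, ← exp_add, ← mul_sum]
    ring_nf
  have hg_meas : StronglyMeasurable[⨆ i ∈ (Ioc k (k + m) : Set ℕ),
      MeasurableSpace.comap (ε i) inferInstance] g :=
    (Finset.measurable_fun_sum _ fun _ hi =>
      (measurable_of_mem_biSup_comap (mem_coe.2 hi)).const_mul b).exp.stronglyMeasurable
  rw [hsplit]
  filter_upwards [condExp_mul_of_indep (walkFiltration_le hmeas k) (biSup_comap_le hmeas _)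
    (indep_walkFiltration_iSup hmeas hindep fun i hi => (mem_Ioc.1 hi).1)
    (((measurable_walk k).sub_const a).const_mul b).exp.stronglyMeasurable hg_meas
    (hsplit ▸ hfg) (hindep.integrable_exp_sum_mul_of_gaussianReal hmeas hgauss_Ioc fun _ => b)]
    with ω hω
  rw [hω, hg, ← exp_add]

end Walk

theorem prod_range_potentials {Ω : Type*} {Z G : ℕ → Ω → ℝ} {b : ℝ} {n : ℕ}
    (hG0 : G 0 = fun ω => exp (b * Z 0 ω))
    (hGk : ∀ k, 1 ≤ k → k ≤ n - 1 → G k = fun ω => exp (b * (Z k ω - Z (k - 1) ω))) :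
    ∀ j < n, ∀ ω, ∏ s ∈ range (j + 1), G s ω = exp (b * Z j ω)
  | 0, _, ω => by simp [hG0]
  | j + 1, hj, ω => by
    rw [prod_range_succ, prod_range_potentials hG0 hGk j (by omega) ω,
      hGk (j + 1) (by omega) (by omega), ← exp_add, Nat.add_sub_cancel]
    ring_nf

/-- The `k`-th summand of the IPS asymptotic variance, before `p²` is subtracted. -/
noncomputable def ipsVarianceTerm {Ω : Type*} [MeasurableSpace Ω] (μ : Measure Ω)
    (F : ℕ → MeasurableSpace Ω) (G : ℕ → Ω → ℝ) (h : Ω → ℝ) (k : ℕ) : ℝ :=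
  (∫ ω, ∏ s ∈ range k, G s ω ∂μ) * ∫ ω, (μ[h | F k] ω) ^ 2 * ∏ s ∈ range k, (G s ω)⁻¹ ∂μ

section IpsVariance

variable {Ω : Type*} {mΩ : MeasurableSpace Ω} {μ : Measure Ω} {ε : ℕ → Ω → ℝ}

theorem ipsVarianceTerm_zero (hmeas : ∀ i, Measurable (ε i)) (hindep : iIndepFun ε μ)
    (hgauss : ∀ i, 1 ≤ i → μ.map (ε i) = gaussianReal 0 1) (G : ℕ → Ω → ℝ) (a b : ℝ) (n : ℕ) :
    ipsVarianceTerm μ (walkFiltration ε) G (fun ω => exp (b * (walk ε n ω - a))) 0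
      = exp (n * b ^ 2 / 2 - a * b) ^ 2 := by
  have := hindep.isProbabilityMeasure
  have hcond := condExp_exp_mul_walk hmeas hindep hgauss a b 0 n
  rw [zero_add] at hcond
  have hsq : ∫ ω, (μ[fun ω => exp (b * (walk ε n ω - a)) | walkFiltration ε 0] ω) ^ 2 ∂μ
      = exp (n * b ^ 2 / 2 - a * b) ^ 2 := by
    rw [integral_congr_ae (g := fun _ => exp (n * b ^ 2 / 2 - a * b) ^ 2)
      (hcond.mono fun ω hω => by simp only [hω, walk_zero]; ring_nf)]
    simp
  simp [ipsVarianceTerm, hsq]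

theorem ipsVarianceTerm_succ (hmeas : ∀ i, Measurable (ε i)) (hindep : iIndepFun ε μ)
    (hgauss : ∀ i, 1 ≤ i → μ.map (ε i) = gaussianReal 0 1) {G : ℕ → Ω → ℝ} {a b : ℝ} {j n : ℕ}
    (hjn : j < n) (hG : ∀ ω, ∏ s ∈ range (j + 1), G s ω = exp (b * walk ε j ω)) :
    ipsVarianceTerm μ (walkFiltration ε) G (fun ω => exp (b * (walk ε n ω - a))) (j + 1)
      = exp (b ^ 2) * exp (n * b ^ 2 / 2 - a * b) ^ 2 := by
  obtain ⟨m, rfl⟩ := Nat.exists_eq_add_of_le hjn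
  have hpot : ∫ ω, ∏ s ∈ range (j + 1), G s ω ∂μ = exp (j * b ^ 2 / 2) := by
    simpa [hG] using integral_exp_mul_walk_add hmeas hindep hgauss j b 0
  have hsq : ∫ ω, (μ[fun ω => exp (b * (walk ε (j + 1 + m) ω - a)) | walkFiltration ε (j + 1)] ω)
        ^ 2 * ∏ s ∈ range (j + 1), (G s ω)⁻¹ ∂μ
      = exp (m * b ^ 2 - 2 * a * b) * exp (j * b ^ 2 / 2 + (2 * b) ^ 2 / 2) := by
    rw [← integral_exp_mul_walk_add hmeas hindep hgauss j b (2 * b), ← integral_const_mul]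
    refine integral_congr_ae ((condExp_exp_mul_walk hmeas hindep hgauss a b (j + 1) m).mono
      fun ω hω => ?_)
    dsimp only
    rw [hω, prod_inv_distrib, hG, ← exp_neg, sq, ← exp_add, ← exp_add, ← exp_add,
      walk_add_one]
    ring_nf
  rw [ipsVarianceTerm, hpot, hsq, sq (exp _), ← exp_add, ← exp_add, ← exp_add, ← exp_add]
  push_cast
  ring_nf

end IpsVariance

theorem gaussian_walk_optimal_variance_general {Ω : Type*} [MeasurableSpace Ω]
    (μ : Measure Ω)
    (ε : ℕ → Ω → ℝ) (hmeas : ∀ i, Measurable (ε i))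
    (hindep : iIndepFun ε μ)
    (hgauss : ∀ i, 1 ≤ i → μ.map (ε i) = gaussianReal 0 1)
    (Z : ℕ → Ω → ℝ) (hZ : ∀ k ω, Z k ω = ∑ i ∈ Finset.Icc 1 k, ε i ω)
    (n : ℕ) (a b : ℝ)
    (h : Ω → ℝ) (hh : h = fun ω => Real.exp (b * (Z n ω - a)))
    (p : ℝ) (hp : p = Real.exp (n * b ^ 2 / 2 - a * b))
    (G : ℕ → Ω → ℝ)
    (hG0 : G 0 = fun ω => Real.exp (b * Z 0 ω))
    (hGk : ∀ k, 1 ≤ k → k ≤ n - 1 →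
      G k = fun ω => Real.exp (b * (Z k ω - Z (k - 1) ω))) :
    ∑ k ∈ Finset.range (n + 1),
        ((∫ ω, ∏ s ∈ Finset.range k, G s ω ∂μ) *
          (∫ ω, ((μ[h | walkFiltration ε k]) ω) ^ 2 *
            ∏ s ∈ Finset.range k, (G s ω)⁻¹ ∂μ) - p ^ 2) =
      n * (Real.exp (b ^ 2) - 1) * Real.exp (n * b ^ 2 - 2 * a * b) ∧
    ∑ k ∈ Finset.range (n + 1),
        ((∫ ω, ∏ s ∈ Finset.range k, G s ω ∂μ) *
          (∫ ω, ((μ[h | walkFiltration ε k]) ω) ^ 2 *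
            ∏ s ∈ Finset.range k, (G s ω)⁻¹ ∂μ) - p ^ 2) =
      n * (Real.exp (b ^ 2) - 1) * p ^ 2 := by
  obtain rfl : Z = walk ε := funext₂ hZ
  subst hh
  have hprod := prod_range_potentials hG0 hGk
  have hvar : ∑ k ∈ range (n + 1),
      (ipsVarianceTerm μ (walkFiltration ε) G (fun ω => exp (b * (walk ε n ω - a))) k - p ^ 2)
        = n * (exp (b ^ 2) - 1) * p ^ 2 := by
    rw [sum_range_succ', ipsVarianceTerm_zero hmeas hindep hgauss, ← hp, sub_self, add_zero,
      sum_congr rfl fun j hj => by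
        rw [ipsVarianceTerm_succ hmeas hindep hgauss (mem_range.1 hj) (hprod j (mem_range.1 hj)),
          ← hp],
      sum_const, card_range, nsmul_eq_mul]
    ring
  have hp2 : p ^ 2 = exp (n * b ^ 2 - 2 * a * b) := by
    rw [hp, sq, ← exp_add]
    ring_nf
  exact ⟨hvar.trans (by rw [hp2]), hvar⟩

/-- **Optimal IPS asymptotic variance for the Gaussian random walk.**
For `Z_k = ε_1 + … + ε_k`, `h = exp(b(Z_n − a))`, `p = exp(nb²/2 − ab)` and the
optimal potentials `G_0 = exp(bZ_0)`, `G_k = exp(b(Z_k − Z_{k-1}))`, the IPS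
asymptotic variance equals `n(e^{b²} − 1)e^{nb² − 2ab} = n(e^{b²} − 1)p²`. -/
theorem gaussian_walk_optimal_variance {Ω : Type*} [MeasurableSpace Ω]
    (μ : Measure Ω) [IsProbabilityMeasure μ]
    (ε : ℕ → Ω → ℝ) (hmeas : ∀ i, Measurable (ε i))
    (hindep : iIndepFun ε μ)
    (hgauss : ∀ i, 1 ≤ i → μ.map (ε i) = gaussianReal 0 1)
    (Z : ℕ → Ω → ℝ) (hZ : ∀ k ω, Z k ω = ∑ i ∈ Finset.Icc 1 k, ε i ω)
    (n : ℕ) (hn : 1 ≤ n) (a b : ℝ) (hb : b ≠ 0)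
    (h : Ω → ℝ) (hh : h = fun ω => Real.exp (b * (Z n ω - a)))
    (p : ℝ) (hp : p = Real.exp (n * b ^ 2 / 2 - a * b))
    (G : ℕ → Ω → ℝ)
    (hG0 : G 0 = fun ω => Real.exp (b * Z 0 ω))
    (hGk : ∀ k, 1 ≤ k → k ≤ n - 1 →
      G k = fun ω => Real.exp (b * (Z k ω - Z (k - 1) ω))) :
    ∑ k ∈ Finset.range (n + 1),
        ((∫ ω, ∏ s ∈ Finset.range k, G s ω ∂μ) *
          (∫ ω, ((μ[h | walkFiltration ε k]) ω) ^ 2 *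
            ∏ s ∈ Finset.range k, (G s ω)⁻¹ ∂μ) - p ^ 2) =
      n * (Real.exp (b ^ 2) - 1) * Real.exp (n * b ^ 2 - 2 * a * b) ∧
    ∑ k ∈ Finset.range (n + 1),
        ((∫ ω, ∏ s ∈ Finset.range k, G s ω ∂μ) *
          (∫ ω, ((μ[h | walkFiltration ε k]) ω) ^ 2 *
            ∏ s ∈ Finset.range k, (G s ω)⁻¹ ∂μ) - p ^ 2) =
      n * (Real.exp (b ^ 2) - 1) * p ^ 2 :=
  gaussian_walk_optimal_variance_general μ ε hmeas hindep hgauss Z hZ n a b h hh p hp G hG0 hGk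
end
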